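/- arXiv:2001.02177 — 2 statements merged into one kernel-verified Lean document; each statement's English description precedes it below -/
import Mathlib

section
/- Let R = ℂ[X, Y, Y⁻¹] be the ring of polynomials in X and Laurent polynomials in Y over ℂ, equipped with the Poisson bracket {f, g} = Y·(∂_X f·∂_Y g − ∂_Y f·∂_X g). Let S ⊆ R be the ℂ-linear span of the monomials XᵏYᵐ with k ≥ 0 an integer and m an integer satisfying −k ≤ m ≤ k. Then: (i) S equals the ℂ-subalgebra of R generated by the three elements X, XY, and XY⁻¹; and (ii) S is closed under the Poisson bracket, i.e. {f, g} ∈ S for all f, g ∈ S. -/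
/-!
Both claims reduce to monomials. The exponents `(k, m)` with `|m| ≤ k` form the additive monoid
generated by `(1, 0)` and `(1, ±1)`, which gives the description by generators. On monomials
`{XᵏYᵐ, XˡYⁿ} = (kn − ml) X^{k+l−1} Y^{m+n}`, and `(k + l − 1, m + n)` leaves the cone `|m| ≤ k`
only when `m = ±k` and `n = ±l` with the same sign, which is exactly when `kn − ml = 0`.
Bilinearity of the bracket extends this from monomials to their span.
-/

noncomputable section

/-- The ring `ℂ[X, Y, Y⁻¹]` of polynomials in `X` and Laurent polynomials in `Y`,
realized as the monoid algebra of `ℕ × ℤ` over `ℂ`: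
the monomial `Xᵏ Yᵐ` corresponds to `single (k, m) 1`. -/
abbrev CylRing : Type := AddMonoidAlgebra ℂ (ℕ × ℤ)

namespace CylRing

/-- The partial derivative `∂_X`, defined on monomials by `∂_X (Xᵏ Yᵐ) = k·X^{k-1} Yᵐ`. -/
def dX (f : CylRing) : CylRing :=
  Finsupp.sum f.coeff fun p c => AddMonoidAlgebra.single (p.1 - 1, p.2) ((p.1 : ℂ) * c)

/-- The operator `Y·∂_Y`, defined on monomials by `Y ∂_Y (Xᵏ Yᵐ) = m·Xᵏ Yᵐ`. -/
def YdY (f : CylRing) : CylRing :=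
  Finsupp.sum f.coeff fun p c => AddMonoidAlgebra.single p ((p.2 : ℂ) * c)

/-- The Poisson bracket `{f, g} = Y·(∂_X f·∂_Y g − ∂_Y f·∂_X g)`
associated to the symplectic form `dX ∧ Y⁻¹ dY` on the holomorphic cylinder. -/
def bracket (f g : CylRing) : CylRing := dX f * YdY g - YdY f * dX g

/-- The `ℂ`-linear span of the monomials `Xᵏ Yᵐ` with `k ∈ ℕ`, `m ∈ ℤ`, `−k ≤ m ≤ k`.
These are the Hamiltonians of the global symmetry subalgebra of `W_∞`. -/
def globalSpan : Submodule ℂ CylRing :=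
  Submodule.span ℂ
    {f : CylRing | ∃ (k : ℕ) (m : ℤ), -(k : ℤ) ≤ m ∧ m ≤ (k : ℤ) ∧
      f = AddMonoidAlgebra.single (k, m) 1}

end CylRing


theorem Submodule.apply_mem_of_mem_span {R M N P : Type*} [CommSemiring R] [AddCommMonoid M]
    [AddCommMonoid N] [AddCommMonoid P] [Module R M] [Module R N] [Module R P]
    (f : M →ₗ[R] N →ₗ[R] P) {s : Set M} {t : Set N} {p : Submodule R P}
    (h : ∀ x ∈ s, ∀ y ∈ t, f x y ∈ p) {x : M} {y : N} (hx : x ∈ span R s) (hy : y ∈ span R t) :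
    f x y ∈ p := by
  have hle : map₂ f (span R s) (span R t) ≤ p := by
    rw [map₂_span_span, span_le]
    exact Set.image2_subset_iff.2 h
  exact hle (apply_mem_map₂ f hx hy)

namespace AddMonoidAlgebra

variable {R G : Type*} [CommSemiring R]

def weightedShift (s : G → G) (w : G → R) : R[G] →ₗ[R] R[G] where
  toFun f := f.coeff.sum fun p c => single (s p) (w p * c)
  map_add' f g := by
    rw [coeff_add]
    exact Finsupp.sum_add_index' (by simp) (by simp [mul_add, single_add])
  map_smul' r f := by
    rw [coeff_smul, Finsupp.sum_smul_index (by simp), RingHom.id_apply, Finsupp.smul_sum]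
    refine Finsupp.sum_congr fun p _ => ?_
    rw [smul_single, smul_eq_mul, mul_left_comm]

theorem weightedShift_single (s : G → G) (w : G → R) (p : G) (c : R) :
    weightedShift s w (single p c) = single (s p) (w p * c) := by
  classical
  simp [weightedShift]

theorem single_one_mem_of_mem_closure [AddMonoid G] {A : Subalgebra R R[G]} {T : Set G}
    (hT : ∀ g ∈ T, single g (1 : R) ∈ A) {p : G} (hp : p ∈ AddSubmonoid.closure T) :
    single p (1 : R) ∈ A := by
  induction hp using AddSubmonoid.closure_induction with
  | mem g hg => exact hT g hg
  | zero => exact one_mem A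
  | add a b _ _ ha hb =>
    have hab := mul_mem ha hb
    rwa [single_mul_single, one_mul] at hab

end AddMonoidAlgebra

namespace CylRing

open AddMonoidAlgebra

def dXₗ : CylRing →ₗ[ℂ] CylRing :=
  weightedShift (fun p : ℕ × ℤ => (p.1 - 1, p.2)) (fun p => (p.1 : ℂ))

def YdYₗ : CylRing →ₗ[ℂ] CylRing :=
  weightedShift id (fun p : ℕ × ℤ => (p.2 : ℂ))

def bracketₗ : CylRing →ₗ[ℂ] CylRing →ₗ[ℂ] CylRing :=
  (LinearMap.mul ℂ CylRing).compl₁₂ dXₗ YdYₗ - (LinearMap.mul ℂ CylRing).compl₁₂ YdYₗ dXₗ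

theorem bracketₗ_apply (f g : CylRing) : bracketₗ f g = bracket f g :=
  rfl

theorem dX_single (p : ℕ × ℤ) (c : ℂ) : dX (single p c) = single (p.1 - 1, p.2) (p.1 * c) :=
  weightedShift_single _ _ p c

theorem YdY_single (p : ℕ × ℤ) (c : ℂ) : YdY (single p c) = single p (p.2 * c) :=
  weightedShift_single _ _ p c

theorem bracket_single_single (k l : ℕ) (m n : ℤ) (c d : ℂ) :
    bracket (single (k, m) c) (single (l, n) d) =
      single (k + l - 1, m + n) ((k * n - m * l) * c * d) := by
  rw [bracket, dX_single, YdY_single, dX_single, YdY_single, single_mul_single,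
    single_mul_single]
  simp only [Prod.mk_add_mk]
  obtain rfl | hk := Nat.eq_zero_or_pos k
  · simp only [CharP.cast_eq_zero, zero_mul, single_zero, zero_sub, zero_add, ← single_neg]
    congr 1; ring
  obtain rfl | hl := Nat.eq_zero_or_pos l
  · simp only [CharP.cast_eq_zero, zero_mul, mul_zero, single_zero, sub_zero, add_zero]
    congr 1; ring
  rw [show k - 1 + l = k + l - 1 by omega, show k + (l - 1) = k + l - 1 by omega, ← single_sub]
  congr 1; ring

theorem single_mem_globalSpan {k : ℕ} {m : ℤ} (h₁ : -(k : ℤ) ≤ m) (h₂ : m ≤ k) (c : ℂ) :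
    single (k, m) c ∈ globalSpan := by
  rw [← mul_one c, ← smul_eq_mul, ← smul_single]
  exact Submodule.smul_mem _ c (Submodule.subset_span ⟨k, m, h₁, h₂, rfl⟩)

theorem one_mem_globalSpan : (1 : CylRing) ∈ globalSpan :=
  single_mem_globalSpan (k := 0) (m := 0) le_rfl le_rfl 1

theorem mul_mem_globalSpan {f g : CylRing} (hf : f ∈ globalSpan) (hg : g ∈ globalSpan) :
    f * g ∈ globalSpan := by
  refine Submodule.apply_mem_of_mem_span (LinearMap.mul ℂ CylRing) ?_ hf hg
  rintro _ ⟨k, m, hm₁, hm₂, rfl⟩ _ ⟨l, n, hn₁, hn₂, rfl⟩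
  rw [LinearMap.mul_apply', single_mul_single, Prod.mk_add_mk]
  exact single_mem_globalSpan (by push_cast; omega) (by push_cast; omega) _

def globalSubalgebra : Subalgebra ℂ CylRing :=
  globalSpan.toSubalgebra one_mem_globalSpan fun _ _ => mul_mem_globalSpan

theorem exponent_bound_of_bracket_coeff_ne_zero {k l : ℕ} {m n : ℤ}
    (hm₁ : -(k : ℤ) ≤ m) (hm₂ : m ≤ k) (hn₁ : -(l : ℤ) ≤ n) (hn₂ : n ≤ l) (h : (k : ℤ) * n - m * l ≠ 0) :
    -((k + l - 1 : ℕ) : ℤ) ≤ m + n ∧ m + n ≤ (k + l - 1 : ℕ) := by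
  refine ⟨?_, ?_⟩ <;> by_contra hlt
  · obtain ⟨rfl, rfl⟩ : m = -k ∧ n = -l := by omega
    exact h (by ring)
  · obtain ⟨rfl, rfl⟩ : m = k ∧ n = l := by omega
    exact h (by ring)

theorem bracket_mem_globalSpan {f g : CylRing} (hf : f ∈ globalSpan) (hg : g ∈ globalSpan) :
    bracket f g ∈ globalSpan := by
  refine Submodule.apply_mem_of_mem_span bracketₗ ?_ hf hg
  rintro _ ⟨k, m, hm₁, hm₂, rfl⟩ _ ⟨l, n, hn₁, hn₂, rfl⟩
  rw [bracketₗ_apply, bracket_single_single]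
  by_cases h : (k : ℤ) * n - m * l = 0
  · have h' : (k * n - m * l : ℂ) = 0 := by exact_mod_cast h
    rw [h', zero_mul, zero_mul, single_zero]
    exact Submodule.zero_mem _
  · obtain ⟨h₁, h₂⟩ := exponent_bound_of_bracket_coeff_ne_zero hm₁ hm₂ hn₁ hn₂ h
    exact single_mem_globalSpan h₁ h₂ _

theorem mk_mem_closure_of_neg_le_of_le {k : ℕ} {m : ℤ} (h₁ : -(k : ℤ) ≤ m) (h₂ : m ≤ k) :
    (k, m) ∈ AddSubmonoid.closure ({(1, 0), (1, 1), (1, -1)} : Set (ℕ × ℤ)) := by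
  have hdecomp : ((k, m) : ℕ × ℤ) =
      (k - m.natAbs) • (1, 0) + m.toNat • (1, 1) + (-m).toNat • (1, -1) := by
    ext <;> simp only [Prod.smul_mk, smul_eq_mul, mul_one, nsmul_zero, Int.nsmul_eq_mul,
      Int.ofNat_toNat, Prod.mk_add_mk, zero_add, mul_neg] <;> omega
  rw [hdecomp]
  refine add_mem (add_mem ?_ ?_) ?_ <;> exact nsmul_mem (AddSubmonoid.subset_closure (by simp)) _

theorem globalSpan_eq_adjoin :
    globalSpan = Subalgebra.toSubmodule (Algebra.adjoin ℂ
      ({single (1, 0) 1, single (1, 1) 1, single (1, -1) 1} : Set CylRing)) := by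
  apply le_antisymm
  · refine Submodule.span_le.2 ?_
    rintro _ ⟨k, m, h₁, h₂, rfl⟩
    refine single_one_mem_of_mem_closure ?_ (mk_mem_closure_of_neg_le_of_le h₁ h₂)
    rintro g (rfl | rfl | rfl) <;> exact Algebra.subset_adjoin (by simp)
  · change _ ≤ Subalgebra.toSubmodule globalSubalgebra
    refine Subalgebra.toSubmodule.monotone (Algebra.adjoin_le ?_)
    rintro _ (rfl | rfl | rfl) <;> exact single_mem_globalSpan (by norm_num) (by norm_num) 1

end CylRing

open CylRing

/-- The span `S` of the monomials `Xᵏ Yᵐ` with `|m| ≤ k` equals the `ℂ`-subalgebra of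
`ℂ[X, Y, Y⁻¹]` generated by `X`, `XY` and `XY⁻¹`, and `S` is closed under the Poisson
bracket `{f, g} = Y (∂_X f ∂_Y g − ∂_Y f ∂_X g)`. -/
theorem globalSpan_eq_adjoin_and_bracket_closed :
    globalSpan =
      Subalgebra.toSubmodule
        (Algebra.adjoin ℂ
          ({AddMonoidAlgebra.single (1, 0) 1, AddMonoidAlgebra.single (1, 1) 1,
            AddMonoidAlgebra.single (1, -1) 1} : Set CylRing)) ∧
    ∀ f g : CylRing, f ∈ globalSpan → g ∈ globalSpan → bracket f g ∈ globalSpan :=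
  ⟨globalSpan_eq_adjoin, fun _ _ => bracket_mem_globalSpan⟩
end
end

section
/- Fix N ∈ ℂ. Let R = ℂ[u₁, u₂, w₁, w₂]/(u₁w₂ − u₂w₁ − N) and let φ : ℂ[A, B, C] → R be the ℂ-algebra homomorphism with φ(A) = (u₁w₂ + u₂w₁)/2, φ(B) = w₁w₂, φ(C) = u₁u₂. Then: (i) the kernel of φ is the principal ideal generated by A² − BC − N²/4; and (ii) the image of φ is exactly the set of elements of R fixed by every ℂ-algebra automorphism σ_t (t ∈ ℂ, t ≠ 0), where σ_t is induced by u₁ ↦ t·u₁, w₁ ↦ t·w₁, u₂ ↦ t⁻¹·u₂, w₂ ↦ t⁻¹·w₂ (these assignments preserve the relation u₁w₂ − u₂w₁ − N, so σ_t is well defined). -/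
/-!
Every point of the surface `A² = BC + N²/4` lifts to the conifold (explicitly, by cases on
whether `B` or `C` vanishes), so a polynomial killed by `φ` vanishes on the surface. Dividing it
by the quadric, which is monic in `A`, leaves a remainder `r₀(B,C) + A r₁(B,C)` vanishing at both
square roots `±A`, hence zero.

For the invariants, grade `ℂ[u₁,u₂,w₁,w₂]` by the weights `(1,-1,1,-1)`. Then `σ_t` multiplies
the degree-`d` part by `t^d` and the conifold ideal is homogeneous, so a class fixed by `σ_2` is
represented by its degree-zero part. Degree-zero monomials are products of `u₁u₂`, `u₁w₂`,
`u₂w₁`, `w₁w₂`, which are `φ(C)`, `φ(A) + N/2`, `φ(A) - N/2`, `φ(B)`.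
-/

noncomputable section

open MvPolynomial

/-- The defining relation `u₁w₂ − u₂w₁ − N` of the deformed conifold, in
`ℂ[u₁, u₂, w₁, w₂] = MvPolynomial (Fin 4) ℂ` with `u₁ = X 0`, `u₂ = X 1`,
`w₁ = X 2`, `w₂ = X 3`. -/
def conifoldRel (N : ℂ) : MvPolynomial (Fin 4) ℂ := X 0 * X 3 - X 1 * X 2 - C N

/-- The ideal generated by the deformed conifold relation. -/
def conifoldIdeal (N : ℂ) : Ideal (MvPolynomial (Fin 4) ℂ) := Ideal.span {conifoldRel N}

/-- The coordinate ring `R = ℂ[u₁, u₂, w₁, w₂]/(u₁w₂ − u₂w₁ − N)` of the deformed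
conifold. -/
abbrev ConifoldRing (N : ℂ) : Type := MvPolynomial (Fin 4) ℂ ⧸ conifoldIdeal N

/-- The quotient map onto the coordinate ring of the deformed conifold. -/
def conifoldMk (N : ℂ) : MvPolynomial (Fin 4) ℂ →ₐ[ℂ] ConifoldRing N :=
  Ideal.Quotient.mkₐ ℂ (conifoldIdeal N)

/-- The `ℂ`-algebra homomorphism `φ : ℂ[A, B, C] → R` with
`φ(A) = (u₁w₂ + u₂w₁)/2`, `φ(B) = w₁w₂`, `φ(C) = u₁u₂`. -/
def phiConifold (N : ℂ) : MvPolynomial (Fin 3) ℂ →ₐ[ℂ] ConifoldRing N :=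
  aeval
    ![conifoldMk N (C (2⁻¹ : ℂ) * (X 0 * X 3 + X 1 * X 2)),
      conifoldMk N (X 2 * X 3), conifoldMk N (X 0 * X 1)]

/-- The rescaling `u₁ ↦ t·u₁, u₂ ↦ t⁻¹·u₂, w₁ ↦ t·w₁, w₂ ↦ t⁻¹·w₂` on the polynomial
ring, for an invertible scalar `t`. -/
def tauScale (t : ℂˣ) : MvPolynomial (Fin 4) ℂ →ₐ[ℂ] MvPolynomial (Fin 4) ℂ :=
  aeval ![C (t : ℂ) * X 0, C ((t⁻¹ : ℂˣ) : ℂ) * X 1, C (t : ℂ) * X 2,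
    C ((t⁻¹ : ℂˣ) : ℂ) * X 3]

lemma tauScale_rel (N : ℂ) (t : ℂˣ) : tauScale t (conifoldRel N) = conifoldRel N := by
  have h : (C ((t : ℂ)) * C (((t⁻¹ : ℂˣ) : ℂ)) : MvPolynomial (Fin 4) ℂ) = 1 := by
    rw [← C_mul, Units.mul_inv, C_1]
  simp only [tauScale, conifoldRel, map_sub, map_mul, aeval_X, aeval_C, algebraMap_eq,
    Matrix.cons_val_zero, Matrix.cons_val_one, Matrix.head_cons, Matrix.cons_val_two,
    Matrix.tail_cons, Matrix.cons_val_three]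
  linear_combination (X 0 * X 3 - X 1 * X 2 : MvPolynomial (Fin 4) ℂ) * h

/-- The rescaling automorphism `σ_t` of the coordinate ring of the deformed conifold,
induced by `u₁ ↦ t·u₁, u₂ ↦ t⁻¹·u₂, w₁ ↦ t·w₁, w₂ ↦ t⁻¹·w₂` (these assignments
preserve the relation `u₁w₂ − u₂w₁ − N`, so `σ_t` is well defined). -/
def sigmaScale (N : ℂ) (t : ℂˣ) : ConifoldRing N →ₐ[ℂ] ConifoldRing N :=
  Ideal.Quotient.liftₐ (conifoldIdeal N) ((conifoldMk N).comp (tauScale t)) (by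
    intro a ha
    rw [AlgHom.comp_apply, conifoldMk, Ideal.Quotient.mkₐ_eq_mk,
      Ideal.Quotient.eq_zero_iff_mem]
    rw [conifoldIdeal, Ideal.mem_span_singleton] at ha ⊢
    obtain ⟨q, rfl⟩ := ha
    rw [map_mul, tauScale_rel]
    exact Dvd.intro _ rfl)


namespace MvPolynomial
variable {σ R : Type*} [CommSemiring R] (w : σ → ℤ)

def weightScale (t : Rˣ) : MvPolynomial σ R →ₐ[R] MvPolynomial σ R :=
  aeval fun i => C ((t ^ w i : Rˣ) : R) * X i

theorem weightScale_monomial (t : Rˣ) (m : σ →₀ ℕ) (a : R) :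
    weightScale w t (monomial m a) = monomial m (((t ^ Finsupp.weight w m : Rˣ) : R) * a) := by
  have hprod :
      (m.prod fun i k => ((t ^ w i : Rˣ) : R) ^ k) = ((t ^ Finsupp.weight w m : Rˣ) : R) := by
    have hsum := map_prod (zpowersHom Rˣ t) (fun i => Multiplicative.ofAdd (m i • w i)) m.support
    simp only [← ofAdd_sum, zpowersHom_apply, toAdd_ofAdd] at hsum
    rw [Finsupp.weight_apply, Finsupp.sum, hsum, Finsupp.prod, Units.coe_prod]
    refine Finset.prod_congr rfl fun i _ => ?_
    rw [← Units.val_pow_eq_pow_val, ← zpow_natCast, ← zpow_mul, nsmul_eq_mul, mul_comm]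
  rw [weightScale, aeval_monomial, algebraMap_eq, monomial_eq]
  simp only [mul_pow, Finsupp.prod_mul, ← map_pow, ← map_finsuppProd, hprod, C_mul]
  ring

theorem coeff_weightScale (t : Rˣ) (m : σ →₀ ℕ) (p : MvPolynomial σ R) :
    coeff m (weightScale w t p) = ((t ^ Finsupp.weight w m : Rˣ) : R) * coeff m p := by
  classical
  induction p using induction_on' with
  | monomial n a =>
    rw [weightScale_monomial, coeff_monomial, coeff_monomial]
    split_ifs with h
    · rw [h]
    · rw [mul_zero]
  | add p q hp hq => rw [map_add, coeff_add, coeff_add, hp, hq, mul_add]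

theorem weightedHomogeneousComponent_weightScale (t : Rˣ) (d : ℤ) (p : MvPolynomial σ R) :
    weightedHomogeneousComponent w d (weightScale w t p) =
      C ((t ^ d : Rˣ) : R) * weightedHomogeneousComponent w d p := by
  ext m
  simp only [coeff_weightedHomogeneousComponent, coeff_weightScale, coeff_C_mul]
  split_ifs with h
  · rw [h]
  · rw [mul_zero]

theorem IsWeightedHomogeneous.weightScale_eq {p : MvPolynomial σ R} {d : ℤ}
    (hp : IsWeightedHomogeneous w p d) (t : Rˣ) :
    weightScale w t p = C ((t ^ d : Rˣ) : R) * p := by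
  ext m
  rw [coeff_weightScale, coeff_C_mul]
  by_cases hm : coeff m p = 0
  · rw [hm, mul_zero, mul_zero]
  · rw [hp hm]

theorem isWeightedHomogeneous_X_mul_X {M : Type*} [AddCommMonoid M] {w : σ → M} {i j : σ}
    (h : w i + w j = 0) : IsWeightedHomogeneous w (X i * X j : MvPolynomial σ R) 0 :=
  h ▸ (isWeightedHomogeneous_X R w i).mul (isWeightedHomogeneous_X R w j)

attribute [local instance] weightedGradedAlgebra in
theorem sub_weightedHomogeneousComponent_zero_mem {σ K : Type*} [Field K]
    {w : σ → ℤ} {I : Ideal (MvPolynomial σ K)}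
    (hI : I.IsHomogeneous (weightedHomogeneousSubmodule K w)) {t : Kˣ} (ht : ¬IsOfFinOrder t)
    {p : MvPolynomial σ K} (hp : weightScale w t p - p ∈ I) :
    p - weightedHomogeneousComponent w 0 p ∈ I := by
  rw [mem_iff_weightedHomogeneousComponent_mem K w hI]
  intro d
  have hp₀ := weightedHomogeneousComponent_isWeightedHomogeneous (R := K) (w := w) 0 p
  rw [map_sub]
  by_cases hd : d = 0
  · rw [hd, hp₀.weightedHomogeneousComponent_same, sub_self]
    exact I.zero_mem
  · rw [hp₀.weightedHomogeneousComponent_ne d hd, sub_zero]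
    have hunit : IsUnit (C ((t ^ d : Kˣ) : K) - 1 : MvPolynomial σ K) := by
      rw [← C_1, ← C_sub]
      refine (Ne.isUnit (sub_ne_zero.mpr ?_)).map C
      rw [Ne, Units.val_eq_one]
      exact fun h => ht (isOfFinOrder_iff_zpow_eq_one.mpr ⟨d, hd, h⟩)
    have h := weightedHomogeneousComponent_mem_of_mem K w hI hp d
    rw [map_sub, weightedHomogeneousComponent_weightScale, ← sub_one_mul, mul_comm] at h
    exact (Ideal.mul_unit_mem_iff_mem I hunit).mp h

end MvPolynomial

theorem quadric_linear_remainder_eq_zero {K : Type*} [Field K] [IsAlgClosed K] [NeZero (2 : K)]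
    (k : K) {r₀ r₁ : MvPolynomial (Fin 2) K}
    (h : ∀ (s : Fin 2 → K) (y : K), y ^ 2 = s 0 * s 1 + k →
      eval s r₀ + y * eval s r₁ = 0) :
    r₀ = 0 ∧ r₁ = 0 := by
  have hroot (s : Fin 2 → K) : ∃ y : K, y ^ 2 = s 0 * s 1 + k :=
    IsAlgClosed.exists_pow_nat_eq _ two_pos
  have h₀ : r₀ = 0 := MvPolynomial.funext fun s => by
    obtain ⟨y, hy⟩ := hroot s
    have hneg := h s (-y) (by rw [neg_sq, hy])
    have h2 : (2 : K) * eval s r₀ = 0 := by linear_combination h s y hy + hneg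
    simpa [NeZero.ne] using h2
  have hq : (X 0 * X 1 + C k) * r₁ = 0 := MvPolynomial.funext fun s => by
    obtain ⟨y, hy⟩ := hroot s
    have hneg := h s (-y) (by rw [neg_sq, hy])
    have h2 : (2 : K) * (y * eval s r₁) = 0 := by linear_combination h s y hy - hneg
    have h3 : y * eval s r₁ = 0 := by simpa [NeZero.ne] using h2
    simp only [map_mul, map_add, eval_X, eval_C, map_zero]
    linear_combination y * h3 - eval s r₁ * hy
  have hne : (X 0 * X 1 + C k : MvPolynomial (Fin 2) K) ≠ 0 := fun h0 => by
    simpa using congrArg (eval ![1, 1 - k]) h0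
  exact ⟨h₀, (mul_eq_zero.mp hq).resolve_left hne⟩

theorem finSuccEquiv_quadric {K : Type*} [Field K] (k : K) :
    finSuccEquiv K 2 (X 0 ^ 2 - X 1 * X 2 - C k) =
      Polynomial.X ^ 2 - Polynomial.C (X 0 * X 1 + C k) := by
  have h₁ : finSuccEquiv K 2 (X 1) = Polynomial.C (X 0) := finSuccEquiv_X_succ (j := 0)
  have h₂ : finSuccEquiv K 2 (X 2) = Polynomial.C (X 1) := finSuccEquiv_X_succ (j := 1)
  rw [map_sub, map_sub, map_mul, map_pow, finSuccEquiv_X_zero, h₁, h₂, ← algebraMap_eq,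
    AlgEquiv.commutes, Polynomial.algebraMap_apply, algebraMap_eq]
  simp only [Polynomial.C_add, Polynomial.C_mul]
  ring

theorem mem_span_quadric_of_eval_eq_zero {K : Type*} [Field K] [IsAlgClosed K] [NeZero (2 : K)]
    (k : K) {p : MvPolynomial (Fin 3) K}
    (hp : ∀ x : Fin 3 → K, x 0 ^ 2 = x 1 * x 2 + k → eval x p = 0) :
    p ∈ Ideal.span {X 0 ^ 2 - X 1 * X 2 - C k} := by
  set G : Polynomial (MvPolynomial (Fin 2) K) := Polynomial.X ^ 2 - Polynomial.C (X 0 * X 1 + C k)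
  have hG : G.Monic := Polynomial.monic_X_pow_sub_C _ two_ne_zero
  have hGdeg : G.natDegree = 2 := Polynomial.natDegree_X_pow_sub_C
  obtain ⟨r, hr_def⟩ : ∃ r, finSuccEquiv K 2 p %ₘ G = r := ⟨_, rfl⟩
  have hr : r = Polynomial.C (r.coeff 1) * Polynomial.X + Polynomial.C (r.coeff 0) := by
    have hlt := Polynomial.natDegree_modByMonic_lt (finSuccEquiv K 2 p) hG
      fun h => by simp [h] at hGdeg
    rw [hr_def, hGdeg] at hlt
    exact Polynomial.eq_X_add_C_of_natDegree_le_one (Nat.le_of_lt_succ hlt)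
  have hvanish (s : Fin 2 → K) (y : K) (hy : y ^ 2 = s 0 * s 1 + k) :
      eval s (r.coeff 0) + y * eval s (r.coeff 1) = 0 := by
    have h := hp (Fin.cons y s) hy
    rw [eval_eq_eval_mv_eval', ← Polynomial.modByMonic_add_div (finSuccEquiv K 2 p) G, hr_def,
      hr] at h
    simp [G, hy] at h
    linear_combination h
  obtain ⟨h₀, h₁⟩ := quadric_linear_remainder_eq_zero k hvanish
  rw [Ideal.mem_span_singleton, ← map_dvd_iff (finSuccEquiv K 2), finSuccEquiv_quadric,
    ← Polynomial.modByMonic_eq_zero_iff_dvd hG, hr_def, hr, h₀, h₁]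
  simp

def conifoldInvariantGens : Fin 3 → MvPolynomial (Fin 4) ℂ :=
  ![C 2⁻¹ * (X 0 * X 3 + X 1 * X 2), X 2 * X 3, X 0 * X 1]

theorem phiConifold_eq_comp (N : ℂ) :
    phiConifold N = (conifoldMk N).comp (aeval conifoldInvariantGens) := by
  rw [comp_aeval, phiConifold]
  congr 1
  funext i
  fin_cases i <;> rfl

theorem conifoldMk_eq_conifoldMk_iff {N : ℂ} {p q : MvPolynomial (Fin 4) ℂ} :
    conifoldMk N p = conifoldMk N q ↔ p - q ∈ conifoldIdeal N :=
  Ideal.Quotient.eq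

theorem exists_conifold_lift (N a b c : ℂ) (h : a ^ 2 = b * c + N ^ 2 / 4) :
    ∃ u₁ u₂ w₁ w₂ : ℂ, u₁ * w₂ - u₂ * w₁ = N ∧ 2⁻¹ * (u₁ * w₂ + u₂ * w₁) = a ∧
      w₁ * w₂ = b ∧ u₁ * u₂ = c := by
  by_cases hb : b = 0
  · by_cases hc : c = 0
    · subst hb hc
      have hsq : (a - N / 2) * (a + N / 2) = 0 := by linear_combination h
      rcases mul_eq_zero.mp hsq with ha | ha
      · exact ⟨1, 0, 0, N, by ring, by linear_combination -ha, by ring, by ring⟩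
      · exact ⟨0, 1, -N, 0, by ring, by linear_combination -ha, by ring, by ring⟩
    · refine ⟨1, c, (a - N / 2) / c, a + N / 2, ?_, ?_, ?_, by ring⟩
      · field_simp; ring
      · field_simp; ring
      · field_simp; linear_combination 4 * h
  · refine ⟨(a + N / 2) / b, a - N / 2, 1, b, ?_, ?_, by ring, ?_⟩
    · field_simp; ring
    · field_simp; ring
    · field_simp; linear_combination 4 * h

theorem eval_eq_zero_of_phiConifold_eq_zero {N : ℂ} {p : MvPolynomial (Fin 3) ℂ}
    (hp : phiConifold N p = 0) (x : Fin 3 → ℂ) (hx : x 0 ^ 2 = x 1 * x 2 + N ^ 2 / 4) :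
    eval x p = 0 := by
  rw [phiConifold_eq_comp, AlgHom.comp_apply, ← map_zero (conifoldMk N),
    conifoldMk_eq_conifoldMk_iff, sub_zero, conifoldIdeal, Ideal.mem_span_singleton] at hp
  obtain ⟨q, hq⟩ := hp
  obtain ⟨u₁, u₂, w₁, w₂, hN, ha, hb, hc⟩ := exists_conifold_lift N _ _ _ hx
  have hx' : x = fun i => eval ![u₁, u₂, w₁, w₂] (conifoldInvariantGens i) := by
    funext i
    fin_cases i <;> simp [conifoldInvariantGens, ha, hb, hc]
  have hz := congrArg (eval ![u₁, u₂, w₁, w₂]) hq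
  rw [← aeval_eq_eval, aeval_eq_bind₁, aeval_bind₁] at hz
  simpa [← hx', conifoldRel, hN] using hz

theorem phiConifold_quadric_eq_zero (N : ℂ) :
    phiConifold N (X 0 ^ 2 - X 1 * X 2 - C (N ^ 2 / 4)) = 0 := by
  rw [phiConifold_eq_comp, AlgHom.comp_apply, ← map_zero (conifoldMk N),
    conifoldMk_eq_conifoldMk_iff, sub_zero, conifoldIdeal, Ideal.mem_span_singleton]
  refine ⟨C 4⁻¹ * (X 0 * X 3 - X 1 * X 2 + C N), MvPolynomial.funext fun z => ?_⟩
  simp [conifoldInvariantGens, conifoldRel]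
  ring

def conifoldWeight : Fin 4 → ℤ := ![1, -1, 1, -1]

theorem tauScale_eq_weightScale (t : ℂˣ) : tauScale t = weightScale conifoldWeight t := by
  rw [tauScale, weightScale]
  congr 1
  funext i
  fin_cases i <;> simp [conifoldWeight]

theorem weight_conifoldWeight (m : Fin 4 →₀ ℕ) :
    Finsupp.weight conifoldWeight m = m 0 - m 1 + m 2 - m 3 := by
  simp [Finsupp.weight_apply, Finsupp.sum_fintype, Fin.sum_univ_four, conifoldWeight]
  ring

theorem isWeightedHomogeneous_conifoldRel (N : ℂ) :
    IsWeightedHomogeneous conifoldWeight (conifoldRel N) 0 :=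
  ((isWeightedHomogeneous_X_mul_X (by decide)).sub (isWeightedHomogeneous_X_mul_X (by decide))).sub
    (isWeightedHomogeneous_C _ N)

theorem isWeightedHomogeneous_conifoldInvariantGens (i : Fin 3) :
    IsWeightedHomogeneous conifoldWeight (conifoldInvariantGens i) 0 := by
  fin_cases i
  all_goals simp only [conifoldInvariantGens]
  · simpa using ((isWeightedHomogeneous_X_mul_X (by decide)).add
      (isWeightedHomogeneous_X_mul_X (by decide))).C_mul (2⁻¹ : ℂ)
  · exact isWeightedHomogeneous_X_mul_X (by decide)
  · exact isWeightedHomogeneous_X_mul_X (by decide)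

attribute [local instance] weightedGradedAlgebra in
theorem isHomogeneous_conifoldIdeal (N : ℂ) :
    (conifoldIdeal N).IsHomogeneous (weightedHomogeneousSubmodule ℂ conifoldWeight) :=
  Ideal.homogeneous_span _ _ (by rintro _ rfl; exact ⟨0, isWeightedHomogeneous_conifoldRel N⟩)

theorem sigmaScale_conifoldMk (N : ℂ) (t : ℂˣ) (p : MvPolynomial (Fin 4) ℂ) :
    sigmaScale N t (conifoldMk N p) = conifoldMk N (tauScale t p) :=
  rfl

theorem sigmaScale_phiConifold (N : ℂ) (t : ℂˣ) (p : MvPolynomial (Fin 3) ℂ) :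
    sigmaScale N t (phiConifold N p) = phiConifold N p := by
  have hfix : (tauScale t).comp (aeval conifoldInvariantGens) = aeval conifoldInvariantGens := by
    rw [comp_aeval]
    congr 1
    funext i
    rw [tauScale_eq_weightScale,
      (isWeightedHomogeneous_conifoldInvariantGens i).weightScale_eq, zpow_zero, Units.val_one,
      C_1, one_mul]
  rw [phiConifold_eq_comp, AlgHom.comp_apply, sigmaScale_conifoldMk,
    ← AlgHom.comp_apply (tauScale t), hfix]

theorem monomial_mem_adjoin_of_weight_eq_zero {R : Type*} [CommSemiring R] {m : Fin 4 →₀ ℕ}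
    (hm : Finsupp.weight conifoldWeight m = 0) :
    monomial m (1 : R) ∈ Algebra.adjoin R {X 0 * X 1, X 0 * X 3, X 1 * X 2, X 2 * X 3} := by
  set S := Algebra.adjoin R {(X 0 * X 1 : MvPolynomial (Fin 4) R), X 0 * X 3, X 1 * X 2, X 2 * X 3}
  have h01 : X 0 * X 1 ∈ S := Algebra.subset_adjoin (by simp)
  have h03 : X 0 * X 3 ∈ S := Algebra.subset_adjoin (by simp)
  have h12 : X 1 * X 2 ∈ S := Algebra.subset_adjoin (by simp)
  have h23 : X 2 * X 3 ∈ S := Algebra.subset_adjoin (by simp)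
  have hbal : m 0 + m 2 = m 1 + m 3 := by
    rw [weight_conifoldWeight] at hm
    omega
  rw [monomial_eq, C_1, one_mul, Finsupp.prod_fintype _ _ fun _ => pow_zero _, Fin.prod_univ_four]
  rcases le_total (m 0) (m 1) with h | h
  · obtain ⟨k, hk⟩ := Nat.exists_eq_add_of_le h
    have hc : m 2 = k + m 3 := by omega
    rw [hk, hc]
    convert mul_mem (mul_mem (pow_mem h01 (m 0)) (pow_mem h12 k)) (pow_mem h23 (m 3)) using 1
    ring
  · obtain ⟨k, hk⟩ := Nat.exists_eq_add_of_le h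
    have hd : m 3 = k + m 2 := by omega
    rw [hk, hd]
    convert mul_mem (mul_mem (pow_mem h01 (m 1)) (pow_mem h03 k)) (pow_mem h23 (m 2)) using 1
    ring

theorem mem_adjoin_of_isWeightedHomogeneous_zero {R : Type*} [CommSemiring R]
    {q : MvPolynomial (Fin 4) R} (hq : IsWeightedHomogeneous conifoldWeight q 0) :
    q ∈ Algebra.adjoin R {X 0 * X 1, X 0 * X 3, X 1 * X 2, X 2 * X 3} := by
  rw [q.as_sum]
  refine sum_mem fun m hm => ?_
  have hsmul : monomial m (coeff m q) = coeff m q • monomial m (1 : R) := by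
    rw [smul_monomial, smul_eq_mul, mul_one]
  rw [hsmul]
  exact Subalgebra.smul_mem _
    (monomial_mem_adjoin_of_weight_eq_zero (hq (mem_support_iff.mp hm))) _

theorem adjoin_le_comap_range_phiConifold (N : ℂ) :
    Algebra.adjoin ℂ {X 0 * X 1, X 0 * X 3, X 1 * X 2, X 2 * X 3} ≤
      (phiConifold N).range.comap (conifoldMk N) := by
  have hphi (p : MvPolynomial (Fin 3) ℂ) (q : MvPolynomial (Fin 4) ℂ) (c : ℂ)
      (h : aeval conifoldInvariantGens p - q = C c * conifoldRel N) :
      q ∈ (phiConifold N).range.comap (conifoldMk N) := by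
    refine ⟨p, ?_⟩
    change phiConifold N p = conifoldMk N q
    rw [phiConifold_eq_comp, AlgHom.comp_apply, conifoldMk_eq_conifoldMk_iff, h, conifoldIdeal]
    exact Ideal.mul_mem_left _ _ (Ideal.subset_span rfl)
  rw [Algebra.adjoin_le_iff]
  rintro q (rfl | rfl | rfl | rfl)
  · exact hphi (X 2) _ 0 (by simp [conifoldInvariantGens])
  · refine hphi (X 0 + C (N / 2)) _ (-2⁻¹) (MvPolynomial.funext fun z => ?_)
    simp [conifoldInvariantGens, conifoldRel]
    ring
  · refine hphi (X 0 - C (N / 2)) _ 2⁻¹ (MvPolynomial.funext fun z => ?_)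
    simp [conifoldInvariantGens, conifoldRel]
    ring
  · exact hphi (X 1) _ 0 (by simp [conifoldInvariantGens])

theorem not_isOfFinOrder_two : ¬IsOfFinOrder (Units.mk0 (2 : ℂ) two_ne_zero) := by
  rw [isOfFinOrder_iff_pow_eq_one]
  rintro ⟨n, hn, h⟩
  have h2 : ((2 ^ n : ℕ) : ℂ) = 1 := by simpa [Units.ext_iff] using h
  have h2' : 2 ^ n = 1 := by exact_mod_cast h2
  simp at h2'
  omega

/-- For the map `φ : ℂ[A, B, C] → R = ℂ[u₁,u₂,w₁,w₂]/(u₁w₂ − u₂w₁ − N)` with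
`φ(A) = (u₁w₂ + u₂w₁)/2`, `φ(B) = w₁w₂`, `φ(C) = u₁u₂`:
(i) the kernel of `φ` is the principal ideal generated by `A² − BC − N²/4`, and
(ii) the image of `φ` is exactly the set of elements of `R` fixed by every rescaling
automorphism `σ_t`, `t ∈ ℂˣ`. -/
theorem conifold_quotient_presentation (N : ℂ) :
    RingHom.ker (phiConifold N : MvPolynomial (Fin 3) ℂ →+* ConifoldRing N) =
      Ideal.span {(X 0 : MvPolynomial (Fin 3) ℂ) ^ 2 - X 1 * X 2 - C (N ^ 2 / 4)} ∧
    Set.range (phiConifold N) = {x : ConifoldRing N | ∀ t : ℂˣ, sigmaScale N t x = x} := by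
  refine ⟨le_antisymm (fun p hp => ?_) ?_, Set.Subset.antisymm ?_ fun x hx => ?_⟩
  · exact mem_span_quadric_of_eval_eq_zero _ (eval_eq_zero_of_phiConifold_eq_zero hp)
  · rw [Ideal.span_le, Set.singleton_subset_iff]
    exact phiConifold_quadric_eq_zero N
  · rintro _ ⟨p, rfl⟩ t
    exact sigmaScale_phiConifold N t p
  · obtain ⟨p, rfl⟩ := Ideal.Quotient.mkₐ_surjective ℂ (conifoldIdeal N) x
    have hfix : weightScale conifoldWeight (Units.mk0 2 two_ne_zero) p - p ∈ conifoldIdeal N := by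
      rw [← tauScale_eq_weightScale, ← conifoldMk_eq_conifoldMk_iff, ← sigmaScale_conifoldMk]
      exact hx _
    have hp₀ : conifoldMk N p = conifoldMk N (weightedHomogeneousComponent conifoldWeight 0 p) :=
      conifoldMk_eq_conifoldMk_iff.mpr <| sub_weightedHomogeneousComponent_zero_mem
        (isHomogeneous_conifoldIdeal N) not_isOfFinOrder_two hfix
    change conifoldMk N p ∈ _
    rw [hp₀]
    exact adjoin_le_comap_range_phiConifold N (mem_adjoin_of_isWeightedHomogeneous_zero
      (weightedHomogeneousComponent_isWeightedHomogeneous 0 p))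
end
end
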